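/- Key step in the vanilla-ADV proof: if ‖μₙ^{(πᴱ)πᴱ} − μₙ^{(πᴱ)πᴬ}‖₁ ≤ ε for all n and P is L_P-Lipschitz in the population, then ‖ρₙᴬ − ρₙᴱ‖₁ ≤ ε(1+L_P)ⁿ for all n, where ρᴬ and ρᴱ are the population flows of πᴬ and πᴱ respectively. -/

import Mathlib

open Finset

/-- Population flow of policy `pol` in a mean-field game: the dynamics at time
`n` is driven by the population distribution itself. -/
noncomputable def popFlow {S A : Type*} [Fintype S] [Fintype A]
    (P : S → A → (S → ℝ) → S → ℝ) (pol : ℕ → S → A → ℝ) (ρ0 : S → ℝ) : ℕ → S → ℝ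
  | 0 => ρ0
  | n + 1 => fun s' => ∑ s : S, ∑ a : A,
      popFlow P pol ρ0 n s * pol n s a * P s a (popFlow P pol ρ0 n) s'

/-- Flow of a single agent using policy `pol` while the dynamics is driven by a
given population distribution sequence `ρpop`. -/
noncomputable def agentFlow {S A : Type*} [Fintype S] [Fintype A]
    (P : S → A → (S → ℝ) → S → ℝ) (ρpop : ℕ → S → ℝ)
    (pol : ℕ → S → A → ℝ) (ρ0 : S → ℝ) : ℕ → S → ℝ
  | 0 => ρ0
  | n + 1 => fun s' => ∑ s : S, ∑ a : A,
      agentFlow P ρpop pol ρ0 n s * pol n s a * P s a (ρpop n) s'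

/-- Value of an agent using `pol` against the population sequence `ρpop`. -/
noncomputable def val {S A : Type*} [Fintype S] [Fintype A]
    (P : S → A → (S → ℝ) → S → ℝ) (r : S → A → (S → ℝ) → ℝ) (ρ0 : S → ℝ) (H : ℕ)
    (pol : ℕ → S → A → ℝ) (ρpop : ℕ → S → ℝ) : ℝ :=
  ∑ n ∈ range H, ∑ s, ∑ a, agentFlow P ρpop pol ρ0 n s * pol n s a * r s a (ρpop n)

/-- Nonnegativity and total mass 1 for `agentFlow`. -/
lemma agentFlow_mass {S A : Type*} [Fintype S] [Fintype A]
    (P : S → A → (S → ℝ) → S → ℝ) (ρpop : ℕ → S → ℝ)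
    (pol : ℕ → S → A → ℝ) (ρ0 : S → ℝ)
    (hP : ∀ s a (ρ : S → ℝ), (∀ s', 0 ≤ P s a ρ s') ∧ ∑ s', P s a ρ s' = 1)
    (hpol : ∀ n s, (∀ a, 0 ≤ pol n s a) ∧ ∑ a, pol n s a = 1)
    (hρ0 : (∀ s, 0 ≤ ρ0 s) ∧ ∑ s, ρ0 s = 1) :
    ∀ n, (∀ s, 0 ≤ agentFlow P ρpop pol ρ0 n s) ∧
      ∑ s, agentFlow P ρpop pol ρ0 n s = 1 := by
  intro n
  induction n with
  | zero => exact hρ0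
  | succ n ih =>
    constructor
    · intro s'
      simp only [agentFlow]
      refine Finset.sum_nonneg fun s _ => Finset.sum_nonneg fun a _ => ?_
      exact mul_nonneg (mul_nonneg (ih.1 s) ((hpol n s).1 a)) ((hP s a _).1 s')
    · simp only [agentFlow]
      calc ∑ s', ∑ s, ∑ a,
            agentFlow P ρpop pol ρ0 n s * pol n s a * P s a (ρpop n) s'
          = ∑ s, ∑ a, ∑ s',
            agentFlow P ρpop pol ρ0 n s * pol n s a * P s a (ρpop n) s' := by
            rw [Finset.sum_comm]
            exact Finset.sum_congr rfl fun s _ => Finset.sum_comm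
        _ = ∑ s, ∑ a, agentFlow P ρpop pol ρ0 n s * pol n s a := by
            simp [← Finset.mul_sum, (hP _ _ _).2]
        _ = ∑ s, agentFlow P ρpop pol ρ0 n s := by
            simp [← Finset.mul_sum, (hpol _ _).2]
        _ = 1 := ih.2

/-- `popFlow` is the `agentFlow` driven by its own population. -/
lemma popFlow_eq_agentFlow {S A : Type*} [Fintype S] [Fintype A]
    (P : S → A → (S → ℝ) → S → ℝ) (pol : ℕ → S → A → ℝ) (ρ0 : S → ℝ) :
    ∀ n, popFlow P pol ρ0 n = agentFlow P (popFlow P pol ρ0) pol ρ0 n := by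
  intro n
  induction n with
  | zero => rfl
  | succ n ih =>
    funext s'
    simp only [popFlow, agentFlow, ← ih]

/-- Key step in the vanilla-ADV proof: if the expert-driven occupancies of
`πᴬ` and `πᴱ` are `ε`-close in ℓ1 at every step, then the population flows
satisfy `‖ρₙᴬ − ρₙᴱ‖₁ ≤ ε (1+L_P)ⁿ`. -/
theorem vanilla_adv_population_flow_bound {S A : Type*} [Fintype S] [Fintype A]
    (P : S → A → (S → ℝ) → S → ℝ) (πE πA : ℕ → S → A → ℝ) (ρ0 : S → ℝ)
    (LP ε : ℝ)
    (hP : ∀ s a (ρ : S → ℝ), (∀ s', 0 ≤ P s a ρ s') ∧ ∑ s', P s a ρ s' = 1)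
    (hPLip : ∀ s a (ρ ρ' : S → ℝ),
      ∑ s', |P s a ρ s' - P s a ρ' s'| ≤ LP * ∑ x, |ρ x - ρ' x|)
    (hπE : ∀ n s, (∀ a, 0 ≤ πE n s a) ∧ ∑ a, πE n s a = 1)
    (hπA : ∀ n s, (∀ a, 0 ≤ πA n s a) ∧ ∑ a, πA n s a = 1)
    (hρ0 : (∀ s, 0 ≤ ρ0 s) ∧ ∑ s, ρ0 s = 1)
    (hErr : ∀ n, ∑ s, ∑ a,
      |πE n s a * popFlow P πE ρ0 n s -
        πA n s a * agentFlow P (popFlow P πE ρ0) πA ρ0 n s| ≤ ε) :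
    ∀ n, ∑ s, |popFlow P πA ρ0 n s - popFlow P πE ρ0 n s| ≤ ε * (1 + LP) ^ n := by
  -- Notation
  set ρE := popFlow P πE ρ0 with hρEdef
  set ρA := popFlow P πA ρ0 with hρAdef
  set σ := agentFlow P ρE πA ρ0 with hσdef
  -- S is nonempty
  have hS : Nonempty S := by
    by_contra h
    rw [not_nonempty_iff] at h
    have := hρ0.2
    simp [Finset.univ_eq_empty] at this
  obtain ⟨s0⟩ := hS
  -- ε ≥ 0
  have hε : 0 ≤ ε := le_trans (by positivity) (hErr 0)
  -- LP ≥ 0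
  have hA : Nonempty A := by
    by_contra h
    rw [not_nonempty_iff] at h
    have := (hπE 0 s0).2
    simp [Finset.univ_eq_empty] at this
  obtain ⟨a0⟩ := hA
  have hLP : 0 ≤ LP := by
    have h1 := hPLip s0 a0 (fun _ => 0) (fun _ => 1)
    have h2 : (0:ℝ) ≤ ∑ s', |P s0 a0 (fun _ => 0) s' - P s0 a0 (fun _ => 1) s'| := by
      positivity
    have h3 : (∑ x : S, |(0:ℝ) - 1|) = (Fintype.card S : ℝ) := by
      simp
    have hcard : (0:ℝ) < Fintype.card S := by
      haveI : Nonempty S := ⟨s0⟩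
      have : 0 < Fintype.card S := Fintype.card_pos
      exact_mod_cast this
    rw [h3] at h1
    nlinarith
  -- mass facts
  have hσm := agentFlow_mass P ρE πA ρ0 hP hπA hρ0
  have hρAm : ∀ n, (∀ s, 0 ≤ ρA n s) ∧ ∑ s, ρA n s = 1 := by
    intro n
    rw [hρAdef, popFlow_eq_agentFlow]
    exact agentFlow_mass P _ πA ρ0 hP hπA hρ0 n
  -- step error: ‖σₙ − ρᴱₙ‖₁ ≤ ε
  have hEstep : ∀ n, ∑ s, |σ n s - ρE n s| ≤ ε := by
    intro n
    refine le_trans ?_ (hErr n)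
    apply Finset.sum_le_sum
    intro s _
    have h1 : σ n s - ρE n s = ∑ a, (πA n s a * σ n s - πE n s a * ρE n s) := by
      rw [Finset.sum_sub_distrib, ← Finset.sum_mul, ← Finset.sum_mul,
        (hπA n s).2, (hπE n s).2, one_mul, one_mul]
    rw [h1]
    refine le_trans (Finset.abs_sum_le_sum_abs _ _) (Finset.sum_le_sum fun a _ => ?_)
    rw [abs_sub_comm]
  -- key recursion: D_{n+1} ≤ Dₙ + LP Eₙ
  have key : ∀ n, ∑ s', |ρA (n+1) s' - σ (n+1) s'| ≤
      (∑ s, |ρA n s - σ n s|) + LP * ∑ s, |ρA n s - ρE n s| := by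
    intro n
    have expand : ∀ s', ρA (n+1) s' - σ (n+1) s' = ∑ s, ∑ a,
        ((ρA n s - σ n s) * πA n s a * P s a (ρA n) s'
          + σ n s * πA n s a * (P s a (ρA n) s' - P s a (ρE n) s')) := by
      intro s'
      rw [hρAdef, hσdef]
      simp only [popFlow, agentFlow, ← hρAdef, ← hσdef, ← hρEdef]
      rw [← Finset.sum_sub_distrib]
      refine Finset.sum_congr rfl fun s _ => ?_
      rw [← Finset.sum_sub_distrib]
      refine Finset.sum_congr rfl fun a _ => ?_
      ring
    calc ∑ s', |ρA (n+1) s' - σ (n+1) s'|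
        ≤ ∑ s', ∑ s, ∑ a,
          (|ρA n s - σ n s| * πA n s a * P s a (ρA n) s'
            + σ n s * πA n s a * |P s a (ρA n) s' - P s a (ρE n) s'|) := by
          refine Finset.sum_le_sum fun s' _ => ?_
          rw [expand s']
          refine le_trans (Finset.abs_sum_le_sum_abs _ _)
            (Finset.sum_le_sum fun s _ => ?_)
          refine le_trans (Finset.abs_sum_le_sum_abs _ _)
            (Finset.sum_le_sum fun a _ => ?_)
          refine le_trans (abs_add_le _ _) ?_
          gcongr
          · rw [abs_mul, abs_mul, abs_of_nonneg ((hπA n s).1 a),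
              abs_of_nonneg ((hP s a _).1 s')]
          · rw [abs_mul, abs_mul, abs_of_nonneg ((hσm n).1 s),
              abs_of_nonneg ((hπA n s).1 a)]
      _ = ∑ s, ∑ a, (|ρA n s - σ n s| * πA n s a * (∑ s', P s a (ρA n) s')
            + σ n s * πA n s a * ∑ s', |P s a (ρA n) s' - P s a (ρE n) s'|) := by
          rw [Finset.sum_comm]
          refine Finset.sum_congr rfl fun s _ => ?_
          rw [Finset.sum_comm]
          refine Finset.sum_congr rfl fun a _ => ?_
          rw [Finset.sum_add_distrib, ← Finset.mul_sum, ← Finset.mul_sum]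
      _ ≤ ∑ s, ∑ a, (|ρA n s - σ n s| * πA n s a
            + σ n s * πA n s a * (LP * ∑ s, |ρA n s - ρE n s|)) := by
          refine Finset.sum_le_sum fun s _ => Finset.sum_le_sum fun a _ => ?_
          rw [(hP s a (ρA n)).2, mul_one]
          exact add_le_add_right (mul_le_mul_of_nonneg_left (hPLip s a _ _)
            (mul_nonneg ((hσm n).1 s) ((hπA n s).1 a))) _
      _ = (∑ s, |ρA n s - σ n s|) + LP * ∑ s, |ρA n s - ρE n s| := by
          have h1 : ∀ s : S, ∑ a, (|ρA n s - σ n s| * πA n s a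
              + σ n s * πA n s a * (LP * ∑ s, |ρA n s - ρE n s|))
              = |ρA n s - σ n s|
                + σ n s * (LP * ∑ s, |ρA n s - ρE n s|) := by
            intro s
            rw [Finset.sum_add_distrib, ← Finset.mul_sum, (hπA n s).2, mul_one]
            congr 1
            rw [← Finset.sum_mul, ← Finset.mul_sum, (hπA n s).2, mul_one]
          simp only [h1]
          rw [Finset.sum_add_distrib, ← Finset.sum_mul, (hσm n).2, one_mul]
  -- E ≤ D + ε
  have hED : ∀ n, ∑ s, |ρA n s - ρE n s| ≤ (∑ s, |ρA n s - σ n s|) + ε := by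
    intro n
    refine le_trans ?_ (add_le_add_right (hEstep n) _)
    rw [← Finset.sum_add_distrib]
    refine Finset.sum_le_sum fun s _ => ?_
    calc |ρA n s - ρE n s| = |(ρA n s - σ n s) + (σ n s - ρE n s)| := by ring_nf
      _ ≤ _ := abs_add_le _ _
  -- D bound by induction
  have hD : ∀ n, ∑ s, |ρA n s - σ n s| ≤ ε * ((1 + LP) ^ n - 1) := by
    intro n
    induction n with
    | zero => simp [hρAdef, hσdef, popFlow, agentFlow]
    | succ n ih =>
      calc ∑ s, |ρA (n+1) s - σ (n+1) s|
          ≤ (∑ s, |ρA n s - σ n s|) + LP * ∑ s, |ρA n s - ρE n s| := key n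
        _ ≤ (∑ s, |ρA n s - σ n s|) + LP * ((∑ s, |ρA n s - σ n s|) + ε) := by
            gcongr; exact hED n
        _ ≤ ε * ((1 + LP) ^ n - 1) + LP * (ε * ((1 + LP) ^ n - 1) + ε) := by
            gcongr
        _ = ε * ((1 + LP) ^ (n+1) - 1) := by ring
  -- conclude
  intro n
  calc ∑ s, |ρA n s - ρE n s| ≤ (∑ s, |ρA n s - σ n s|) + ε := hED n
    _ ≤ ε * ((1 + LP) ^ n - 1) + ε := by gcongr; exact hD n
    _ = ε * (1 + LP) ^ n := by ring
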